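/- Let d ≥ 1 be an integer, 0 < γ < 1, 0 < p < 1, and p ≤ r ≤ 1 be such that ψ̂_p(r^d) = ψ_p(r^d) (i.e., the point (r^d, h_p(r)) lies on the convex minorant of ψ_p). Let W_0 = f_p^γ and let f ∈ W_Ω satisfy ‖f‖_d^d ≥ 2γ(1−γ)r^d. Then I_{W_0}(f) ≥ I_{W_0}(f_r^γ), with equality if and only if f = f_r^γ almost everywhere. -/

import Mathlib

open MeasureTheory Set Filter
open scoped ENNReal NNReal

noncomputable section

namespace GraphonLDP

/-- The unit square `[0,1]² ⊆ ℝ²`. -/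
def unitSq : Set (ℝ × ℝ) := Set.Icc (0:ℝ) 1 ×ˢ Set.Icc (0:ℝ) 1

/-- A graphon: a measurable, symmetric function with values in `[0,1]`. -/
def IsGraphon (f : ℝ → ℝ → ℝ) : Prop :=
  Measurable (Function.uncurry f) ∧ (∀ x y, f x y ∈ Set.Icc (0:ℝ) 1) ∧ ∀ x y, f x y = f y x

open Classical in
/-- The pointwise relative entropy `h_p(u)`, valued in `[0,∞]`
(with `h_0(0) = h_1(1) = 0`, `h_0(u) = ∞` for `u ≠ 0`, `h_1(u) = ∞` for `u ≠ 1`,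
and the convention `0 log 0 = 0`, which is automatic since `Real.log 0 = 0`). -/
def relEnt (p u : ℝ) : ℝ≥0∞ :=
  if p = 0 then (if u = 0 then 0 else ⊤)
  else if p = 1 then (if u = 1 then 0 else ⊤)
  else ENNReal.ofReal (u * Real.log (u / p) + (1 - u) * Real.log ((1 - u) / (1 - p)))

/-- The relative entropy functional `I_{W₀}(f)`, valued in `[0,∞]`. -/
def Ient (W₀ f : ℝ → ℝ → ℝ) : ℝ≥0∞ :=
  (1 / 2) * ∫⁻ q in unitSq, relEnt (W₀ q.1 q.2) (f q.1 q.2)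

/-- `Ω = {(x,y) ∈ [0,1]² : 0 < W₀(x,y) < 1}`. -/
def OmegaSet (W₀ : ℝ → ℝ → ℝ) : Set (ℝ × ℝ) :=
  {q | q ∈ unitSq ∧ W₀ q.1 q.2 ∈ Set.Ioo (0:ℝ) 1}

/-- `f ∈ W_Ω`: `f` is a graphon agreeing with `W₀` a.e. on `[0,1]² \ Ω`. -/
def MemWOmega (W₀ f : ℝ → ℝ → ℝ) : Prop :=
  IsGraphon f ∧
    ∀ᵐ q ∂(volume.restrict (unitSq \ OmegaSet W₀)), f q.1 q.2 = W₀ q.1 q.2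

/-- The cut distance `d_□(f,g)`. -/
def cutDist (f g : ℝ → ℝ → ℝ) : ℝ :=
  ⨆ p : {S : Set ℝ // MeasurableSet S ∧ S ⊆ Set.Icc (0:ℝ) 1} ×
        {T : Set ℝ // MeasurableSet T ∧ T ⊆ Set.Icc (0:ℝ) 1},
    |∫ q in ((p.1 : Set ℝ) ×ˢ (p.2 : Set ℝ)), (f q.1 q.2 - g q.1 q.2)|

/-- The set of values of `W₀` on the unit square. -/
def imageVals (W₀ : ℝ → ℝ → ℝ) : Set ℝ := {w : ℝ | ∃ q ∈ unitSq, W₀ q.1 q.2 = w}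

/-- Real-valued relative entropy `h_p(u)` for `p ∈ (0,1)`. -/
def hRel (p u : ℝ) : ℝ :=
  u * Real.log (u / p) + (1 - u) * Real.log ((1 - u) / (1 - p))

/-- `ψ_p(x) = h_p(x^{1/d})`. -/
def psi (d : ℕ) (p : ℝ) : ℝ → ℝ := fun x => hRel p (x ^ ((d : ℝ)⁻¹))

/-- The convex minorant on `[0,1]`: pointwise supremum of affine minorants. -/
def convexMinorant (F : ℝ → ℝ) (x : ℝ) : ℝ :=
  sSup {y : ℝ | ∃ a b : ℝ, (∀ z ∈ Set.Icc (0:ℝ) 1, a * z + b ≤ F z) ∧ y = a * x + b}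

/-- `A⁺_ε(f,c) = {(x,y) ∈ [0,1]² : f(x,y) − c ≥ ε}`. -/
def Aplus (f : ℝ → ℝ → ℝ) (c ε : ℝ) : Set (ℝ × ℝ) :=
  {q | q ∈ unitSq ∧ ε ≤ f q.1 q.2 - c}

/-- `A⁻_ε(f,c) = {(x,y) ∈ [0,1]² : c − f(x,y) ≥ ε}`. -/
def Aminus (f : ℝ → ℝ → ℝ) (c ε : ℝ) : Set (ℝ × ℝ) :=
  {q | q ∈ unitSq ∧ ε ≤ c - f q.1 q.2}

/-- Partial sums `γ_1 + ⋯ + γ_n`. -/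
def cumSum {m : ℕ} (γ : Fin m → ℝ) (n : ℕ) : ℝ :=
  ∑ i : Fin m, if (i : ℕ) < n then γ i else 0

/-- The interval `I_j` of the block structure: `I_1 = [0,γ_1]`,
`I_j = (γ_1+⋯+γ_{j-1}, γ_1+⋯+γ_j]` for `j ≥ 2`. -/
def blockI {m : ℕ} (γ : Fin m → ℝ) (j : Fin m) : Set ℝ :=
  if (j : ℕ) = 0 then Set.Icc 0 (cumSum γ 1)
  else Set.Ioc (cumSum γ (j : ℕ)) (cumSum γ ((j : ℕ) + 1))

/-- `γ` is a vector of positive block widths summing to `1`. -/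
def GoodWidths {m : ℕ} (γ : Fin m → ℝ) : Prop :=
  (∀ i, 0 < γ i) ∧ ∑ i, γ i = 1

/-- `f` is the block graphon in `B^γ` with matrix `P`. -/
def IsBlockGraphon {m : ℕ} (γ : Fin m → ℝ) (P : Fin m → Fin m → ℝ) (f : ℝ → ℝ → ℝ) : Prop :=
  (∀ i j, P i j ∈ Set.Icc (0:ℝ) 1) ∧ (∀ i j, P i j = P j i) ∧
    ∀ i j, ∀ x ∈ blockI γ i, ∀ y ∈ blockI γ j, f x y = P i j

/-- The homomorphism density `t(H,f)`. -/
def homDensity {v : ℕ} (H : SimpleGraph (Fin v)) [DecidableRel H.Adj] (f : ℝ → ℝ → ℝ) : ℝ :=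
  ∫ x in Set.univ.pi (fun _ : Fin v => Set.Icc (0:ℝ) 1),
    ∏ e ∈ Finset.univ.filter (fun e : Fin v × Fin v => e.1 < e.2 ∧ H.Adj e.1 e.2),
      f (x e.1) (x e.2)

/-- `‖g‖_d = (∫_{[0,1]²} g^d)^{1/d}`. -/
def normD (d : ℕ) (g : ℝ → ℝ → ℝ) : ℝ :=
  (∫ q in unitSq, (g q.1 q.2) ^ d) ^ ((d : ℝ)⁻¹)

/-- The rescaled restriction `f_{ij}` of `f` to the block `I_i × I_j`. -/
def fBlock {m : ℕ} (γ : Fin m → ℝ) (f : ℝ → ℝ → ℝ) (i j : Fin m) : ℝ → ℝ → ℝ :=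
  fun x y => f (cumSum γ (i : ℕ) + x * γ i) (cumSum γ (j : ℕ) + y * γ j)

/-- `K_{W₀}(f,a)`. -/
def Kfun (W₀ f a : ℝ → ℝ → ℝ) : ℝ :=
  ∫ q in unitSq,
    (a q.1 q.2 * f q.1 q.2 -
      Real.log (W₀ q.1 q.2 * Real.exp (a q.1 q.2) + 1 - W₀ q.1 q.2))

/-- Symmetric functions in `L²([0,1]²)`. -/
def SymL2 (a : ℝ → ℝ → ℝ) : Prop :=
  Measurable (Function.uncurry a) ∧
    (∀ᵐ q ∂(volume.restrict unitSq), a q.1 q.2 = a q.2 q.1) ∧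
    IntegrableOn (fun q : ℝ × ℝ => (a q.1 q.2) ^ 2) unitSq

/-- The matrix `P` with the entries `(a,b)` and `(b,a)` replaced by `q`. -/
def modMat {m : ℕ} (P : Fin m → Fin m → ℝ) (a b : Fin m) (q : ℝ) :
    Fin m → Fin m → ℝ :=
  fun i j => if (i = a ∧ j = b) ∨ (i = b ∧ j = a) then q else P i j

/-- The block `I_a × I_b` of the block graphon `W₀ = (P i j)` is relevant:
`P a b > 0` and replacing the entries `P a b = P b a` by any strictly smaller
(nonnegative) value strictly decreases the homomorphism density of `H`. -/
def RelevantBlock {v m : ℕ} (H : SimpleGraph (Fin v)) [DecidableRel H.Adj]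
    (γ : Fin m → ℝ) (P : Fin m → Fin m → ℝ) (W₀ : ℝ → ℝ → ℝ) (a b : Fin m) : Prop :=
  0 < P a b ∧ ∀ q : ℝ, 0 ≤ q → q < P a b →
    ∀ g : ℝ → ℝ → ℝ, IsGraphon g → IsBlockGraphon γ (modMat P a b q) g →
      homDensity H g < homDensity H W₀

open Classical in
/-- `g^{+η}`: equal to `min (g + η) 1` on `Ω` and to `g` off `Ω`. -/
def gplus (W₀ g : ℝ → ℝ → ℝ) (η : ℝ) : ℝ → ℝ → ℝ := fun x y =>
  if (x, y) ∈ OmegaSet W₀ then min (g x y + η) 1 else g x y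

open Classical in
/-- The graphon `f_{a,b,c}^γ`: `a` on `[0,γ]²`, `c` on `(γ,1]²`, `b` elsewhere. -/
def fabc (γ a b c : ℝ) : ℝ → ℝ → ℝ := fun x y =>
  if x ∈ Set.Icc (0:ℝ) γ ∧ y ∈ Set.Icc (0:ℝ) γ then a
  else if x ∈ Set.Ioc γ 1 ∧ y ∈ Set.Ioc γ 1 then c
  else b

/-- Membership in the two-block family `B^{(γ,1-γ)} = {f_{a,b,c}^γ : a,b,c ∈ [0,1]}`. -/
def memB2 (γ : ℝ) (f : ℝ → ℝ → ℝ) : Prop :=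
  ∃ a b c : ℝ, a ∈ Set.Icc (0:ℝ) 1 ∧ b ∈ Set.Icc (0:ℝ) 1 ∧ c ∈ Set.Icc (0:ℝ) 1 ∧
    f = fabc γ a b c

/-- The diagonal blocks `[0,γ]² ∪ (γ,1]²`. -/
def diagBlocks (γ : ℝ) : Set (ℝ × ℝ) :=
  (Set.Icc (0:ℝ) γ ×ˢ Set.Icc (0:ℝ) γ) ∪ (Set.Ioc γ 1 ×ˢ Set.Ioc γ 1)

/-- The operator norm `‖f‖_op = sup {‖T_f u‖₂ : ‖u‖₂ ≤ 1}` of the kernel operator `T_f`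
on `L²([0,1])`. -/
def opNorm (f : ℝ → ℝ → ℝ) : ℝ :=
  sSup {c : ℝ | ∃ u : ℝ → ℝ, Measurable u ∧
    eLpNorm u 2 (volume.restrict (Set.Icc (0:ℝ) 1)) ≤ 1 ∧
    c = (∫ x in Set.Icc (0:ℝ) 1, (∫ y in Set.Icc (0:ℝ) 1, f x y * u y) ^ 2) ^ ((2:ℝ)⁻¹)}

section Helpers
open Real

variable {p u : ℝ}

lemma hRel_zero (hp : 0 < p) (hp1 : p < 1) : hRel p 0 = -Real.log (1 - p) := by
  have : (1:ℝ) - p ≠ 0 := by linarith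
  simp [hRel, Real.log_div one_ne_zero this]

lemma hRel_one (hp : 0 < p) (hp1 : p < 1) : hRel p 1 = -Real.log p := by
  simp [hRel, Real.log_div one_ne_zero (ne_of_gt hp)]

lemma hRel_self (hp : 0 < p) (hp1 : p < 1) : hRel p p = 0 := by
  simp [hRel, div_self (ne_of_gt hp), div_self (by linarith : (1:ℝ) - p ≠ 0)]

lemma hRel_pos (hp : 0 < p) (hp1 : p < 1) (hu : u ∈ Icc (0:ℝ) 1) (hne : u ≠ p) :
    0 < hRel p u := by
  obtain ⟨hu0, hu1⟩ := hu
  rcases eq_or_lt_of_le hu0 with h0 | h0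
  · rw [← h0, hRel_zero hp hp1]
    simp only [neg_pos]
    exact Real.log_neg (by linarith) (by linarith)
  rcases eq_or_lt_of_le hu1 with h1 | h1
  · rw [h1, hRel_one hp hp1]
    simp only [neg_pos]
    exact Real.log_neg hp hp1
  -- 0 < u < 1
  have h1u : 0 < 1 - u := by linarith
  have key1 : Real.log (p / u) ≤ p / u - 1 :=
    Real.log_le_sub_one_of_pos (by positivity)
  have key2 : Real.log ((1 - p) / (1 - u)) < (1 - p) / (1 - u) - 1 := by
    refine Real.log_lt_sub_one_of_pos (by apply div_pos <;> linarith) ?_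
    intro h
    apply hne
    have h1u' : (1:ℝ) - u ≠ 0 := by linarith
    field_simp at h
    linarith
  have e1 : Real.log (u / p) = -Real.log (p / u) := by
    rw [← Real.log_inv]; congr 1; field_simp
  have e2 : Real.log ((1 - u) / (1 - p)) = -Real.log ((1 - p) / (1 - u)) := by
    rw [← Real.log_inv]; congr 1; field_simp
  have b1 : u * Real.log (u / p) ≥ u * (1 - p / u) := by
    rw [e1]
    have := mul_le_mul_of_nonneg_left key1 (le_of_lt h0)
    nlinarith
  have b2 : (1 - u) * Real.log ((1 - u) / (1 - p)) > (1 - u) * (1 - (1 - p) / (1 - u)) := by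
    rw [e2]
    have := mul_lt_mul_of_pos_left key2 h1u
    nlinarith
  have c1 : u * (1 - p / u) = u - p := by field_simp
  have c2 : (1 - u) * (1 - (1 - p) / (1 - u)) = p - u := by field_simp; ring
  unfold hRel
  nlinarith

lemma hRel_nonneg (hp : 0 < p) (hp1 : p < 1) (hu : u ∈ Icc (0:ℝ) 1) :
    0 ≤ hRel p u := by
  rcases eq_or_ne u p with h | h
  · rw [h, hRel_self hp hp1]
  · exact le_of_lt (hRel_pos hp hp1 hu h)

lemma hRel_eq_zero_iff (hp : 0 < p) (hp1 : p < 1) (hu : u ∈ Icc (0:ℝ) 1) :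
    hRel p u = 0 ↔ u = p := by
  constructor
  · intro h
    by_contra hne
    exact absurd h (ne_of_gt (hRel_pos hp hp1 hu hne))
  · intro h; rw [h]; exact hRel_self hp hp1

lemma hRel_le_bound (hp : 0 < p) (hp1 : p < 1) (hu : u ∈ Icc (0:ℝ) 1) :
    hRel p u ≤ -Real.log p - Real.log (1 - p) := by
  obtain ⟨hu0, hu1⟩ := hu
  have h1u : (0:ℝ) ≤ 1 - u := by linarith
  have b1 : u * Real.log (u / p) ≤ -Real.log p := by
    rcases eq_or_lt_of_le hu0 with h0 | h0
    · rw [← h0]; simp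
      have := Real.log_neg hp hp1
      linarith
    · rw [Real.log_div (ne_of_gt h0) (ne_of_gt hp), mul_sub]
      have t1 : u * Real.log u ≤ 0 :=
        mul_nonpos_of_nonneg_of_nonpos (le_of_lt h0) (Real.log_nonpos (le_of_lt h0) hu1)
      have t2 : u * Real.log p ≥ 1 * Real.log p := by
        rcases le_or_gt (Real.log p) 0 with h | h
        · nlinarith
        · nlinarith [Real.log_neg hp hp1]
      linarith
  have b2 : (1 - u) * Real.log ((1 - u) / (1 - p)) ≤ -Real.log (1 - p) := by
    rcases eq_or_lt_of_le hu1 with h1 | h1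
    · rw [h1]; simp
      have := Real.log_neg (by linarith : (0:ℝ) < 1 - p) (by linarith)
      linarith
    · have h1u' : 0 < 1 - u := by linarith
      rw [Real.log_div (ne_of_gt h1u') (by linarith : (1:ℝ) - p ≠ 0), mul_sub]
      have t1 : (1 - u) * Real.log (1 - u) ≤ 0 :=
        mul_nonpos_of_nonneg_of_nonpos h1u (Real.log_nonpos (le_of_lt h1u') (by linarith))
      have t2 : (1 - u) * Real.log (1 - p) ≥ 1 * Real.log (1 - p) := by
        have hlp : Real.log (1 - p) < 0 := Real.log_neg (by linarith) (by linarith)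
        nlinarith
      linarith
  unfold hRel; linarith

variable {p u a b r : ℝ} {d : ℕ}

/-- auxiliary globally-continuous version of hRel -/
noncomputable def hAux (p u : ℝ) : ℝ :=
  (u * Real.log u - u * Real.log p) + ((1-u) * Real.log (1-u) - (1-u) * Real.log (1-p))

lemma hAux_eq (hp : 0 < p) (hp1 : p < 1) (hu0 : 0 ≤ u) (hu1 : u ≤ 1) :
    hRel p u = hAux p u := by
  unfold hRel hAux
  congr 1
  · rcases eq_or_lt_of_le hu0 with h | h
    · simp [← h]
    · rw [Real.log_div (ne_of_gt h) (ne_of_gt hp)]; ring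
  · rcases eq_or_lt_of_le hu1 with h | h
    · simp [h]
    · rw [Real.log_div (by linarith : (1:ℝ) - u ≠ 0) (by linarith : (1:ℝ) - p ≠ 0)]; ring

lemma hAux_continuous : Continuous (hAux p) := by
  unfold hAux
  have h1 : Continuous fun u : ℝ => u * Real.log u := Real.continuous_mul_log
  have h2 : Continuous fun u : ℝ => (1-u) * Real.log (1-u) :=
    h1.comp (continuous_const.sub continuous_id)
  fun_prop

lemma hRel_continuousOn (hp : 0 < p) (hp1 : p < 1) :
    ContinuousOn (hRel p) (Icc (0:ℝ) 1) := by
  refine ContinuousOn.congr (f := hAux p) hAux_continuous.continuousOn ?_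
  intro u hu
  exact hAux_eq hp hp1 hu.1 hu.2

lemma hAux_hasDerivAt (hp : 0 < p) (hp1 : p < 1) (hu0 : 0 < u) (hu1 : u < 1) :
    HasDerivAt (hAux p)
      (Real.log u - Real.log p - (Real.log (1-u) - Real.log (1-p))) u := by
  have h1 : HasDerivAt (fun u : ℝ => u * Real.log u) (Real.log u + 1) u :=
    Real.hasDerivAt_mul_log (ne_of_gt hu0)
  have h2 : HasDerivAt (fun u : ℝ => u * Real.log p) (Real.log p) u := by
    simpa using (hasDerivAt_id u).mul_const (Real.log p)
  have h3 : HasDerivAt (fun u : ℝ => (1-u) * Real.log (1-u))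
      (-(Real.log (1-u) + 1)) u := by
    have hinner : HasDerivAt (fun u : ℝ => 1 - u) (-1) u := by
      exact (hasDerivAt_id' (x := u)).const_sub (1:ℝ)
    have := (Real.hasDerivAt_mul_log (by linarith : (1:ℝ) - u ≠ 0)).comp u hinner
    exact this.congr_deriv (by ring)
  have h4 : HasDerivAt (fun u : ℝ => (1-u) * Real.log (1-p)) (-Real.log (1-p)) u := by
    have hinner : HasDerivAt (fun u : ℝ => 1 - u) (-1) u := by
      exact (hasDerivAt_id' (x := u)).const_sub (1:ℝ)
    simpa [mul_comm] using hinner.mul_const (Real.log (1-p))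
  have := ((h1.sub h2).add (h3.sub h4))
  exact this.congr_deriv (by ring)

lemma hRel_hasDerivAt (hp : 0 < p) (hp1 : p < 1) (hu0 : 0 < u) (hu1 : u < 1) :
    HasDerivAt (hRel p)
      (Real.log u - Real.log p - (Real.log (1-u) - Real.log (1-p))) u := by
  refine (hAux_hasDerivAt hp hp1 hu0 hu1).congr_of_eventuallyEq ?_
  have hmem : u ∈ Ioo (0:ℝ) 1 := ⟨hu0, hu1⟩
  filter_upwards [Ioo_mem_nhds hu0 hu1] with v hv
  exact hAux_eq hp hp1 (le_of_lt hv.1) (le_of_lt hv.2)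

/-- the function `g(u) = h_p(u) - (a u^d + b)` -/
noncomputable def gfun (p a b : ℝ) (d : ℕ) (u : ℝ) : ℝ := hRel p u - (a * u^d + b)

/-- the derivative of `g` -/
noncomputable def g1fun (p a : ℝ) (d : ℕ) (u : ℝ) : ℝ :=
  Real.log u - Real.log p - (Real.log (1-u) - Real.log (1-p)) - a * d * u^(d-1)

/-- the second derivative of `g` -/
noncomputable def g2fun (p a : ℝ) (d : ℕ) (u : ℝ) : ℝ :=
  1/u + 1/(1-u) - a * d * (d-1:ℕ) * u^(d-2)

lemma gfun_hasDerivAt (hp : 0 < p) (hp1 : p < 1) (hu0 : 0 < u) (hu1 : u < 1) :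
    HasDerivAt (gfun p a b d) (g1fun p a d u) u := by
  have h1 := hRel_hasDerivAt hp hp1 hu0 hu1 (p := p)
  have h2 : HasDerivAt (fun u : ℝ => a * u^d + b) (a * (d * u^(d-1))) u := by
    exact (((hasDerivAt_pow d u)).const_mul a).add_const b
  have := h1.sub h2
  exact this.congr_deriv (by unfold g1fun; ring)

lemma g1fun_hasDerivAt (hd : 1 ≤ d) (hp : 0 < p) (hp1 : p < 1) (hu0 : 0 < u) (hu1 : u < 1) :
    HasDerivAt (g1fun p a d) (g2fun p a d u) u := by
  have h1 : HasDerivAt Real.log u⁻¹ u := Real.hasDerivAt_log (ne_of_gt hu0)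
  have h2 : HasDerivAt (fun u : ℝ => Real.log (1-u)) (-(1-u)⁻¹) u := by
    have hinner : HasDerivAt (fun u : ℝ => 1 - u) (-1) u := by
      exact (hasDerivAt_id' (x := u)).const_sub (1:ℝ)
    have := (Real.hasDerivAt_log (by linarith : (1:ℝ) - u ≠ 0)).comp u hinner
    exact this.congr_deriv (by ring)
  have h3 : HasDerivAt (fun u : ℝ => a * d * u^(d-1))
      (a * d * ((d-1:ℕ) * u^(d-1-1))) u := (hasDerivAt_pow (d-1) u).const_mul (a * d)
  have := ((h1.sub_const (Real.log p)).sub (h2.sub_const (Real.log (1-p)))).sub h3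
  refine this.congr_deriv ?_
  unfold g2fun
  have : d - 1 - 1 = d - 2 := by omega
  rw [this]
  field_simp
  ring

/-- the unimodal profile `u^{d-1}(1-u)` -/
noncomputable def wfun (d : ℕ) (u : ℝ) : ℝ := u^(d-1) * (1-u)

lemma wfun_hasDerivAt (hd : 2 ≤ d) (u : ℝ) :
    HasDerivAt (wfun d) (u^(d-2) * ((d-1:ℕ) - d*u)) u := by
  have h1 : HasDerivAt (fun x : ℝ => x^(d-1)) ((d-1:ℕ) * u^(d-1-1)) u := hasDerivAt_pow (d-1) u
  have h2 : HasDerivAt (fun x : ℝ => 1 - x) (-1) u := by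
    exact (hasDerivAt_id' (x := u)).const_sub (1:ℝ)
  have := h1.mul h2
  refine this.congr_deriv ?_
  have e1 : d - 1 - 1 = d - 2 := by omega
  have e2 : u^(d-1) = u^(d-2) * u := by
    rw [← pow_succ]; congr 1; omega
  rw [e1, e2]
  push_cast [Nat.cast_sub (by omega : 1 ≤ d)]
  ring

lemma g2_neg_iff (hd : 2 ≤ d) (hu0 : 0 < u) (hu1 : u < 1) :
    g2fun p a d u < 0 ↔ 1 < a * d * (d-1:ℕ) * wfun d u := by
  have h1u : 0 < 1 - u := by linarith
  have key : u^(d-2) * (u * (1-u)) = wfun d u := by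
    unfold wfun
    have : u^(d-1) = u^(d-2) * u := by rw [← pow_succ]; congr 1; omega
    rw [this]; ring
  unfold g2fun
  rw [sub_neg, div_add_div _ _ (ne_of_gt hu0) (ne_of_gt h1u)]
  rw [div_lt_iff₀ (by positivity)]
  have e1 : 1 * (1-u) + u * 1 = 1 := by ring
  have e2 : a * ↑d * ↑(d-1) * u^(d-2) * (u*(1-u)) = a * ↑d * ↑(d-1) * wfun d u := by
    rw [← key]; ring
  rw [e1, e2]

lemma g2_pos_d1 (hu0 : 0 < u) (hu1 : u < 1) : 0 < g2fun p a 1 u := by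
  unfold g2fun
  simp only [Nat.sub_self, Nat.cast_zero]
  have : (0:ℝ) < 1/u + 1/(1-u) := by
    have h1 := div_pos one_pos hu0
    have h2 := div_pos one_pos (by linarith : (0:ℝ) < 1-u)
    linarith
  simpa using this

lemma wfun_monotoneOn (hd : 2 ≤ d) :
    MonotoneOn (wfun d) (Icc (0:ℝ) ((d-1:ℕ)/(d:ℝ))) := by
  refine monotoneOn_of_deriv_nonneg (convex_Icc _ _) ?_ ?_ ?_
  · have : Continuous (wfun d) := by unfold wfun; fun_prop
    exact this.continuousOn
  · intro x hx
    exact ((wfun_hasDerivAt hd x).differentiableAt).differentiableWithinAt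
  · intro x hx
    rw [interior_Icc] at hx
    rw [(wfun_hasDerivAt hd x).deriv]
    have hx0 : 0 < x := hx.1
    have hxm : x < (d-1:ℕ)/(d:ℝ) := hx.2
    have hd0 : (0:ℝ) < d := by positivity
    rw [lt_div_iff₀ hd0] at hxm
    have h2 : (0:ℝ) ≤ (d-1:ℕ) - d * x := by nlinarith
    exact mul_nonneg (pow_nonneg hx0.le _) h2

lemma wfun_antitoneOn (hd : 2 ≤ d) :
    AntitoneOn (wfun d) (Icc ((d-1:ℕ)/(d:ℝ)) 1) := by
  refine antitoneOn_of_deriv_nonpos (convex_Icc _ _) ?_ ?_ ?_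
  · have : Continuous (wfun d) := by unfold wfun; fun_prop
    exact this.continuousOn
  · intro x hx
    exact ((wfun_hasDerivAt hd x).differentiableAt).differentiableWithinAt
  · intro x hx
    rw [interior_Icc] at hx
    rw [(wfun_hasDerivAt hd x).deriv]
    have hd0 : (0:ℝ) < d := by positivity
    have hm0 : (0:ℝ) ≤ ((d-1:ℕ):ℝ)/(d:ℝ) := by positivity
    have hx0 : 0 < x := lt_of_le_of_lt hm0 hx.1
    have hxm := hx.1
    rw [div_lt_iff₀ hd0] at hxm
    refine mul_nonpos_of_nonneg_of_nonpos (pow_nonneg hx0.le _) ?_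
    nlinarith

lemma g2_interval (hd : 1 ≤ d) (ha : 0 < a) {x y z : ℝ}
    (hx0 : 0 < x) (hxy : x < y) (hyz : y < z) (hz1 : z < 1)
    (hgx : g2fun p a d x < 0) (hgz : g2fun p a d z < 0) : g2fun p a d y < 0 := by
  rcases eq_or_lt_of_le hd with hd1 | hd2
  · rw [← hd1] at hgx
    exact absurd hgx (not_lt.mpr (le_of_lt (g2_pos_d1 hx0 (by linarith))))
  · have hd2 : 2 ≤ d := hd2
    have hy0 : 0 < y := lt_trans hx0 hxy
    have hy1 : y < 1 := lt_trans hyz hz1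
    rw [g2_neg_iff hd2 hx0 (by linarith)] at hgx
    rw [g2_neg_iff hd2 (by linarith) hz1] at hgz
    rw [g2_neg_iff hd2 hy0 hy1]
    have hc : 0 < a * (d:ℝ) * ((d-1:ℕ):ℝ) := by
      have : (0:ℝ) < ((d-1:ℕ):ℝ) := by
        have : 1 ≤ d - 1 := by omega
        exact_mod_cast Nat.lt_of_lt_of_le Nat.zero_lt_one this
      positivity
    set m := ((d-1:ℕ):ℝ)/(d:ℝ) with hm
    rcases le_or_gt y m with hym | hym
    · have hmono := wfun_monotoneOn hd2 (Set.mem_Icc.mpr ⟨hx0.le, (le_of_lt hxy).trans hym⟩)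
        (Set.mem_Icc.mpr ⟨hy0.le, hym⟩) hxy.le
      nlinarith [mul_le_mul_of_nonneg_left hmono hc.le]
    · have hm1 : m ≤ 1 := by
        rw [hm, div_le_one (by positivity)]
        exact_mod_cast Nat.sub_le d 1
      have hmono := wfun_antitoneOn hd2 (Set.mem_Icc.mpr ⟨hym.le, hyz.le.trans hz1.le⟩)
        (Set.mem_Icc.mpr ⟨hym.le.trans hyz.le, hz1.le⟩) hyz.le
      nlinarith [mul_le_mul_of_nonneg_left hmono hc.le]

lemma g2_not_zero_on (hd : 1 ≤ d) (ha : 0 < a) {s t : ℝ} (hs : 0 < s) (hst : s < t) (ht : t < 1)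
    (h : ∀ u ∈ Ioo s t, g2fun p a d u = 0) : False := by
  rcases eq_or_lt_of_le hd with hd1 | hd2
  · subst hd1
    have hmem : (s+t)/2 ∈ Ioo s t := ⟨by linarith, by linarith⟩
    have h0 := h _ hmem
    have hpos := g2_pos_d1 (p := p) (a := a) (by linarith : 0 < (s+t)/2) (by linarith)
    linarith
  · have hd2 : 2 ≤ d := hd2
    have hc : (0:ℝ) < a * (d:ℝ) * ((d-1:ℕ):ℝ) := by
      have : (0:ℝ) < ((d-1:ℕ):ℝ) := by
        have : 1 ≤ d - 1 := by omega
        exact_mod_cast Nat.lt_of_lt_of_le Nat.zero_lt_one this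
      positivity
    -- wfun is constant on Ioo s t
    have hwconst : ∀ u ∈ Ioo s t, wfun d u = 1 / (a * (d:ℝ) * ((d-1:ℕ):ℝ)) := by
      intro u hu
      have hu0 : 0 < u := lt_trans hs hu.1
      have hu1 : u < 1 := lt_trans hu.2 ht
      have h1u : 0 < 1 - u := by linarith
      have := h u hu
      unfold g2fun at this
      have hsum : 1/u + 1/(1-u) = a * ↑d * ↑(d-1) * u^(d-2) := by linarith
      have hkey : u^(d-2) * (u * (1-u)) = wfun d u := by
        unfold wfun
        have : u^(d-1) = u^(d-2) * u := by rw [← pow_succ]; congr 1; omega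
        rw [this]; ring
      have hone : (1/u + 1/(1-u)) * (u * (1-u)) = 1 := by field_simp; ring
      rw [hsum] at hone
      rw [eq_div_iff (ne_of_gt hc)]
      have e : wfun d u * (a * (d:ℝ) * ((d-1:ℕ):ℝ)) = a * ↑d * ↑(d-1) * u^(d-2) * (u*(1-u)) := by
        rw [← hkey]; ring
      rw [e]; exact hone
    -- hence its derivative vanishes there, forcing u = (d-1)/d for all u
    have hder : ∀ u ∈ Ioo s t, u = ((d-1:ℕ):ℝ)/(d:ℝ) := by
      intro u hu
      have hu0 : 0 < u := lt_trans hs hu.1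
      have hzero : HasDerivAt (wfun d) 0 u := by
        refine (hasDerivAt_const u (1 / (a * (d:ℝ) * ((d-1:ℕ):ℝ)))).congr_of_eventuallyEq ?_
        filter_upwards [Ioo_mem_nhds hu.1 hu.2] with v hv
        exact hwconst v hv
      have := (wfun_hasDerivAt hd2 u).unique hzero
      have hpow : (0:ℝ) < u^(d-2) := pow_pos hu0 _
      have : ((d-1:ℕ):ℝ) - d*u = 0 := by
        rcases mul_eq_zero.mp this with h | h
        · exact absurd h (ne_of_gt hpow)
        · exact h
      have hd0 : (0:ℝ) < d := by positivity
      have hcast : ((d-1:ℕ):ℝ) = (d:ℝ) - 1 := by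
        push_cast [Nat.cast_sub (by omega : 1 ≤ d)]; ring
      rw [hcast] at this
      field_simp
      linarith
    have h1 := hder ((2*s+t)/3) ⟨by linarith, by linarith⟩
    have h2 := hder ((s+2*t)/3) ⟨by linarith, by linarith⟩
    have := h1.trans h2.symm
    linarith

lemma sides_lemma (hd : 1 ≤ d) (hp : 0 < p) (hp1 : p < 1) (ha : 0 < a)
    (hmin : ∀ u ∈ Icc (0:ℝ) 1, a * u^d + b ≤ hRel p u)
    (hr0 : 0 < r) (hr1 : r < 1) (hr : hRel p r = a * r^d + b) :
    (∀ z ∈ Icc (0:ℝ) 1, z < r → a * z^d + b < hRel p z) ∨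
    (∀ z ∈ Icc (0:ℝ) 1, r < z → a * z^d + b < hRel p z) := by
  by_contra hcon
  push_neg at hcon
  obtain ⟨⟨z₁, hz₁m, hz₁r, hz₁⟩, ⟨z₂, hz₂m, hz₂r, hz₂⟩⟩ := hcon
  set g := gfun p a b d with hg
  have gnn : ∀ u ∈ Icc (0:ℝ) 1, 0 ≤ g u := by
    intro u hu; unfold g; unfold gfun; linarith [hmin u hu]
  have gz₁ : g z₁ = 0 := le_antisymm (by unfold g; unfold gfun; linarith) (gnn z₁ hz₁m)
  have gz₂ : g z₂ = 0 := le_antisymm (by unfold g; unfold gfun; linarith) (gnn z₂ hz₂m)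
  have gr : g r = 0 := by unfold g; unfold gfun; linarith
  have gcont : ContinuousOn g (Icc (0:ℝ) 1) := by
    unfold g; unfold gfun
    exact (hRel_continuousOn hp hp1).sub (by fun_prop)
  have gderiv : ∀ u, 0 < u → u < 1 → HasDerivAt g (g1fun p a d u) u :=
    fun u h0 h1 => gfun_hasDerivAt hp hp1 h0 h1
  have g1deriv : ∀ u, 0 < u → u < 1 → HasDerivAt (g1fun p a d) (g2fun p a d u) u :=
    fun u h0 h1 => g1fun_hasDerivAt hd hp hp1 h0 h1
  -- the hump lemma
  have hump : ∀ s t : ℝ, 0 ≤ s → s < t → t ≤ 1 → g s = 0 → g t = 0 →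
      ∃ P Q, s < P ∧ P < Q ∧ Q < t ∧ 0 < g1fun p a d P ∧ g1fun p a d Q < 0 := by
    intro s t hs0 hst ht1 hgs hgt
    have hsub : Ioo s t ⊆ Ioo (0:ℝ) 1 := fun u hu => ⟨lt_of_le_of_lt hs0 hu.1, lt_of_lt_of_le hu.2 ht1⟩
    -- there is a point with g > 0
    have hx : ∃ x ∈ Ioo s t, 0 < g x := by
      by_contra hno
      push_neg at hno
      have hzero : ∀ u ∈ Ioo s t, g u = 0 := by
        intro u hu
        have h1 := hno u hu
        have h2 := gnn u ⟨le_trans hs0 hu.1.le, le_trans hu.2.le ht1⟩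
        linarith
      have hg1zero : ∀ u ∈ Ioo s t, g1fun p a d u = 0 := by
        intro u hu
        have h1 := gderiv u (hsub hu).1 (hsub hu).2
        have h2 : HasDerivAt g 0 u := by
          refine (hasDerivAt_const u (0:ℝ)).congr_of_eventuallyEq ?_
          filter_upwards [Ioo_mem_nhds hu.1 hu.2] with v hv
          exact hzero v hv
        exact h1.unique h2
      have hg2zero : ∀ u ∈ Ioo s t, g2fun p a d u = 0 := by
        intro u hu
        have h1 := g1deriv u (hsub hu).1 (hsub hu).2
        have h2 : HasDerivAt (g1fun p a d) 0 u := by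
          refine (hasDerivAt_const u (0:ℝ)).congr_of_eventuallyEq ?_
          filter_upwards [Ioo_mem_nhds hu.1 hu.2] with v hv
          exact hg1zero v hv
        exact h1.unique h2
      refine g2_not_zero_on (p := p) hd ha (s := (2*s+t)/3) (t := (s+2*t)/3)
        (by linarith) (by linarith) (by linarith) ?_
      intro u hu
      exact hg2zero u ⟨by cases hu; linarith, by cases hu; linarith⟩
    obtain ⟨x, hxm, hxpos⟩ := hx
    have hIsx : Icc s x ⊆ Icc (0:ℝ) 1 :=
      Icc_subset_Icc hs0 (le_trans hxm.2.le ht1)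
    have hIxt : Icc x t ⊆ Icc (0:ℝ) 1 :=
      Icc_subset_Icc (le_trans hs0 hxm.1.le) ht1
    obtain ⟨P, hPm, hP⟩ := exists_hasDerivAt_eq_slope g (g1fun p a d) hxm.1
      (gcont.mono hIsx)
      (fun u hu => gderiv u (lt_of_le_of_lt hs0 hu.1) (lt_of_lt_of_le (lt_trans hu.2 hxm.2) ht1))
    obtain ⟨Q, hQm, hQ⟩ := exists_hasDerivAt_eq_slope g (g1fun p a d) hxm.2
      (gcont.mono hIxt)
      (fun u hu => gderiv u (lt_of_le_of_lt hs0 (lt_trans hxm.1 hu.1)) (lt_of_lt_of_le hu.2 ht1))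
    refine ⟨P, Q, hPm.1, lt_trans hPm.2 hQm.1, hQm.2, ?_, ?_⟩
    · rw [hP, hgs]
      exact div_pos (by linarith) (by linarith [hxm.1])
    · rw [hQ, hgt]
      have h1 : 0 < t - x := by linarith [hxm.2]
      have h2 : (0 - g x) / (t - x) < 0 := by
        apply div_neg_of_neg_of_pos _ h1
        linarith
      simpa using h2
  obtain ⟨P₁, Q₁, hP₁, hPQ₁, hQ₁r, hg1P₁, hg1Q₁⟩ :=
    hump z₁ r hz₁m.1 hz₁r (le_of_lt hr1) gz₁ gr
  obtain ⟨P₂, Q₂, hP₂, hPQ₂, hQ₂z, hg1P₂, hg1Q₂⟩ :=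
    hump r z₂ (le_of_lt hr0) hz₂r hz₂m.2 gr gz₂
  -- bounds putting everything inside (0,1)
  have hP₁0 : 0 < P₁ := lt_of_le_of_lt hz₁m.1 hP₁
  have hQ₁1 : Q₁ < 1 := lt_trans hQ₁r hr1
  have hP₂0 : 0 < P₂ := lt_trans hr0 hP₂
  have hQ₂1 : Q₂ < 1 := lt_of_lt_of_le hQ₂z hz₂m.2
  -- continuity of g1 on subsets of (0,1)
  have g1cont : ∀ S : Set ℝ, S ⊆ Ioo (0:ℝ) 1 → ContinuousOn (g1fun p a d) S := by
    intro S hS u hu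
    exact ((g1deriv u (hS hu).1 (hS hu).2).continuousAt).continuousWithinAt
  -- find points with g2 < 0 in each hump
  have hfind : ∀ P Q : ℝ, 0 < P → P < Q → Q < 1 → 0 < g1fun p a d P → g1fun p a d Q < 0 →
      ∃ s, P < s ∧ s < Q ∧ g2fun p a d s < 0 := by
    intro P Q hP0 hPQ hQ1 hgP hgQ
    by_contra hno
    push_neg at hno
    have hsub : Icc P Q ⊆ Ioo (0:ℝ) 1 := fun u hu =>
      ⟨lt_of_lt_of_le hP0 hu.1, lt_of_le_of_lt hu.2 hQ1⟩
    have hmono : MonotoneOn (g1fun p a d) (Icc P Q) := by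
      refine monotoneOn_of_deriv_nonneg (convex_Icc _ _) (g1cont _ hsub) ?_ ?_
      · intro u hu
        rw [interior_Icc] at hu
        exact ((g1deriv u (hsub (Ioo_subset_Icc_self hu)).1
          (hsub (Ioo_subset_Icc_self hu)).2).differentiableAt).differentiableWithinAt
      · intro u hu
        rw [interior_Icc] at hu
        rw [(g1deriv u (hsub (Ioo_subset_Icc_self hu)).1 (hsub (Ioo_subset_Icc_self hu)).2).deriv]
        exact hno u hu.1 hu.2
    have := hmono (left_mem_Icc.mpr hPQ.le) (right_mem_Icc.mpr hPQ.le) hPQ.le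
    linarith
  obtain ⟨s₁, hs₁P, hs₁Q, hs₁⟩ := hfind P₁ Q₁ hP₁0 hPQ₁ hQ₁1 hg1P₁ hg1Q₁
  obtain ⟨s₂, hs₂P, hs₂Q, hs₂⟩ := hfind P₂ Q₂ hP₂0 hPQ₂ hQ₂1 hg1P₂ hg1Q₂
  -- g2 < 0 on [Q₁, P₂]
  have hg2neg : ∀ v ∈ Icc Q₁ P₂, g2fun p a d v < 0 := by
    intro v hv
    refine g2_interval hd ha (x := s₁) (z := s₂) ?_ ?_ ?_ ?_ hs₁ hs₂
    · linarith
    · linarith [hv.1]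
    · linarith [hv.2]
    · linarith
  -- g1 antitone on [Q₁, P₂]
  have hQ₁P₂ : Q₁ < P₂ := lt_trans hQ₁r hP₂
  have hsub2 : Icc Q₁ P₂ ⊆ Ioo (0:ℝ) 1 := fun u hu =>
    ⟨lt_of_lt_of_le (lt_trans hP₁0 hPQ₁) hu.1, lt_of_le_of_lt hu.2 (lt_trans hPQ₂ hQ₂1)⟩
  have hanti : AntitoneOn (g1fun p a d) (Icc Q₁ P₂) := by
    refine antitoneOn_of_deriv_nonpos (convex_Icc _ _) (g1cont _ hsub2) ?_ ?_
    · intro u hu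
      rw [interior_Icc] at hu
      exact ((g1deriv u (hsub2 (Ioo_subset_Icc_self hu)).1
        (hsub2 (Ioo_subset_Icc_self hu)).2).differentiableAt).differentiableWithinAt
    · intro u hu
      rw [interior_Icc] at hu
      rw [(g1deriv u (hsub2 (Ioo_subset_Icc_self hu)).1 (hsub2 (Ioo_subset_Icc_self hu)).2).deriv]
      exact (hg2neg u (Ioo_subset_Icc_self hu)).le
  have := hanti (left_mem_Icc.mpr hQ₁P₂.le) (right_mem_Icc.mpr hQ₁P₂.le) hQ₁P₂.le
  linarith

section minorant

variable (hd : 1 ≤ d) (hp : 0 < p) (hp1 : p < 1)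

lemma psi_pow_eq (hd : 1 ≤ d) (hu : 0 ≤ u) : psi d p (u^d) = hRel p u := by
  unfold psi
  congr 1
  have hdne : (d:ℝ) ≠ 0 := by positivity
  rw [← Real.rpow_natCast u d, ← Real.rpow_mul hu, mul_inv_cancel₀ hdne, Real.rpow_one]

lemma psi_nonneg (hd : 1 ≤ d) (hp : 0 < p) (hp1 : p < 1) {z : ℝ} (hz : z ∈ Icc (0:ℝ) 1) :
    0 ≤ psi d p z := by
  unfold psi
  refine hRel_nonneg hp hp1 ⟨Real.rpow_nonneg hz.1 _, Real.rpow_le_one hz.1 hz.2 (by positivity)⟩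

/-- the set whose sSup defines the minorant -/
def minorSet (F : ℝ → ℝ) (x : ℝ) : Set ℝ :=
  {y : ℝ | ∃ a b : ℝ, (∀ z ∈ Set.Icc (0:ℝ) 1, a * z + b ≤ F z) ∧ y = a * x + b}

lemma convexMinorant_eq_sSup (F : ℝ → ℝ) (x : ℝ) :
    convexMinorant F x = sSup (minorSet F x) := rfl

lemma minorSet_nonempty (F : ℝ → ℝ) (hF : ∀ z ∈ Icc (0:ℝ) 1, 0 ≤ F z) (x : ℝ) :
    (minorSet F x).Nonempty := by
  exact ⟨0, 0, 0, by intro z hz; simpa using hF z hz, by ring⟩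

lemma minorSet_bddAbove (F : ℝ → ℝ) {x : ℝ} (hx : x ∈ Icc (0:ℝ) 1) :
    BddAbove (minorSet F x) := by
  refine ⟨(1-x) * F 0 + x * F 1, ?_⟩
  rintro y ⟨a, b, hmin, rfl⟩
  have h0 := hmin 0 (by constructor <;> norm_num)
  have h1 := hmin 1 (by constructor <;> norm_num)
  have hx0 := hx.1
  have hx1 := hx.2
  nlinarith

lemma le_convexMinorant (F : ℝ → ℝ) {x A B : ℝ} (hx : x ∈ Icc (0:ℝ) 1)
    (hmin : ∀ z ∈ Set.Icc (0:ℝ) 1, A * z + B ≤ F z) :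
    A * x + B ≤ convexMinorant F x :=
  le_csSup (minorSet_bddAbove F hx) ⟨A, B, hmin, rfl⟩

lemma convexMinorant_le (F : ℝ → ℝ) (hF : ∀ z ∈ Icc (0:ℝ) 1, 0 ≤ F z)
    {x : ℝ} (hx : x ∈ Icc (0:ℝ) 1) :
    convexMinorant F x ≤ F x := by
  refine csSup_le (minorSet_nonempty F hF x) ?_
  rintro y ⟨a, b, hmin, rfl⟩
  exact hmin x hx

lemma convexMinorant_convexOn (F : ℝ → ℝ) (hF : ∀ z ∈ Icc (0:ℝ) 1, 0 ≤ F z) :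
    ConvexOn ℝ (Icc (0:ℝ) 1) (convexMinorant F) := by
  refine ⟨convex_Icc _ _, ?_⟩
  intro x hx y hy s t hs ht hst
  have hmem : s • x + t • y ∈ Icc (0:ℝ) 1 := (convex_Icc _ _) hx hy hs ht hst
  refine csSup_le (minorSet_nonempty F hF _) ?_
  rintro v ⟨a, b, hmin, rfl⟩
  have h1 : a * x + b ≤ convexMinorant F x := le_convexMinorant F hx hmin
  have h2 : a * y + b ≤ convexMinorant F y := le_convexMinorant F hy hmin
  have : a * (s • x + t • y) + b = s * (a * x + b) + t * (a * y + b) := by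
    simp only [smul_eq_mul]; linear_combination b * hst.symm
  rw [this]
  simp only [smul_eq_mul]
  have := mul_le_mul_of_nonneg_left h1 hs
  have := mul_le_mul_of_nonneg_left h2 ht
  linarith

/-- Existence of a positive-slope supporting line at r^d when p < r < 1. -/
lemma exists_support_line (hd : 1 ≤ d) (hp : 0 < p) (hp1 : p < 1)
    (hpr : p < r) (hr1 : r < 1)
    (hconv : convexMinorant (psi d p) (r ^ d) = psi d p (r ^ d)) :
    ∃ a b : ℝ, 0 < a ∧ (∀ u ∈ Icc (0:ℝ) 1, a * u^d + b ≤ hRel p u) ∧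
      hRel p r = a * r^d + b := by
  set F := psi d p with hF
  have hFnn : ∀ z ∈ Icc (0:ℝ) 1, 0 ≤ F z := fun z hz => psi_nonneg hd hp hp1 hz
  set M := convexMinorant F with hM
  have hr0 : (0:ℝ) < r := lt_trans hp hpr
  set x₀ := r ^ d with hx₀
  have hx₀0 : 0 < x₀ := pow_pos hr0 d
  have hx₀1 : x₀ < 1 := pow_lt_one₀ hr0.le hr1 (by omega)
  have hx₀mem : x₀ ∈ Icc (0:ℝ) 1 := ⟨hx₀0.le, hx₀1.le⟩
  have hp₀mem : p ^ d ∈ Icc (0:ℝ) 1 := ⟨by positivity, pow_le_one₀ hp.le hp1.le⟩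
  have hpx₀ : p ^ d < x₀ := pow_lt_pow_left₀ hpr hp.le (by omega)
  have hMx₀ : M x₀ = hRel p r := by
    rw [hconv, hF, hx₀, psi_pow_eq hd hr0.le]
  have hMp : M (p^d) ≤ 0 := by
    have := convexMinorant_le F hFnn hp₀mem
    rw [hF, psi_pow_eq hd hp.le, hRel_self hp hp1] at this
    exact this
  have hcvx : ConvexOn ℝ (Icc (0:ℝ) 1) M := convexMinorant_convexOn F hFnn
  -- the set of right slopes
  set A := (fun y => (M y - M x₀)/(y - x₀)) '' (Ioc x₀ 1) with hA
  have hAne : A.Nonempty := ⟨_, ⟨1, ⟨hx₀1, le_refl 1⟩, rfl⟩⟩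
  set c₀ := (M x₀ - M (p^d))/(x₀ - p^d) with hc₀
  have hc₀pos : 0 < c₀ := by
    apply div_pos
    · have : 0 < hRel p r := hRel_pos hp hp1 ⟨hr0.le, hr1.le⟩ (ne_of_gt hpr)
      rw [hMx₀]; linarith
    · linarith
  have hlb : ∀ v ∈ A, c₀ ≤ v := by
    rintro v ⟨y, hy, rfl⟩
    exact hcvx.slope_mono_adjacent hp₀mem ⟨le_trans (le_trans hp₀mem.1 hpx₀.le) hy.1.le, hy.2⟩
      hpx₀ hy.1
  have hAbdd : BddBelow A := ⟨c₀, hlb⟩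
  set a := sInf A with ha
  have hac₀ : c₀ ≤ a := le_csInf hAne hlb
  have hapos : 0 < a := lt_of_lt_of_le hc₀pos hac₀
  set b := M x₀ - a * x₀ with hb
  -- the line is below M on [0,1]
  have hline : ∀ x ∈ Icc (0:ℝ) 1, a * x + b ≤ M x := by
    intro x hx
    rcases lt_trichotomy x x₀ with hlt | heq | hgt
    · -- x < x₀ : slope(x,x₀) ≤ every right slope hence ≤ a
      have hslope : (M x₀ - M x)/(x₀ - x) ≤ a := by
        refine le_csInf hAne ?_
        rintro v ⟨y, hy, rfl⟩
        exact hcvx.slope_mono_adjacent hx ⟨le_trans (le_trans hx.1 hlt.le) hy.1.le, hy.2⟩ hlt hy.1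
      rw [div_le_iff₀ (by linarith)] at hslope
      rw [hb]; nlinarith
    · rw [heq, hb]; linarith
    · -- x₀ < x : a ≤ slope(x₀,x)
      have hslope : a ≤ (M x - M x₀)/(x - x₀) := csInf_le hAbdd ⟨x, ⟨hgt, hx.2⟩, rfl⟩
      rw [le_div_iff₀ (by linarith)] at hslope
      rw [hb]; nlinarith
  refine ⟨a, b, hapos, ?_, ?_⟩
  · intro u hu
    have hud : u^d ∈ Icc (0:ℝ) 1 := ⟨pow_nonneg hu.1 _, pow_le_one₀ hu.1 hu.2⟩
    calc a * u^d + b ≤ M (u^d) := hline _ hud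
      _ ≤ F (u^d) := convexMinorant_le F hFnn hud
      _ = hRel p u := by rw [hF, psi_pow_eq hd hu.1]
  · rw [← hMx₀, hb]; ring

end minorant


end Helpers


section PartD
open Real

variable {γ p r : ℝ} {d : ℕ}

/-- The off-diagonal region. -/
def Oset (γ : ℝ) : Set (ℝ × ℝ) := unitSq \ diagBlocks γ

lemma measurableSet_unitSq : MeasurableSet unitSq :=
  (measurableSet_Icc).prod (measurableSet_Icc)

lemma measurableSet_diagBlocks : MeasurableSet (diagBlocks γ) :=
  (measurableSet_Icc.prod measurableSet_Icc).union (measurableSet_Ioc.prod measurableSet_Ioc)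

lemma measurableSet_Oset : MeasurableSet (Oset γ) :=
  measurableSet_unitSq.diff measurableSet_diagBlocks

lemma diagBlocks_subset (hγ0 : 0 ≤ γ) (hγ1 : γ ≤ 1) : diagBlocks γ ⊆ unitSq := by
  unfold diagBlocks unitSq
  apply Set.union_subset
  · exact Set.prod_mono (Set.Icc_subset_Icc le_rfl hγ1) (Set.Icc_subset_Icc le_rfl hγ1)
  · exact Set.prod_mono (Set.Ioc_subset_Icc_self.trans (Set.Icc_subset_Icc hγ0 le_rfl))
      (Set.Ioc_subset_Icc_self.trans (Set.Icc_subset_Icc hγ0 le_rfl))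

lemma volume_unitSq : volume unitSq = 1 := by
  unfold unitSq
  rw [MeasureTheory.Measure.volume_eq_prod, MeasureTheory.Measure.prod_prod,
    Real.volume_Icc]
  norm_num

lemma volume_diagBlocks (hγ0 : 0 ≤ γ) (hγ1 : γ ≤ 1) :
    volume (diagBlocks γ) = ENNReal.ofReal (γ^2 + (1-γ)^2) := by
  unfold diagBlocks
  have hdisj : Disjoint (Set.Icc (0:ℝ) γ ×ˢ Set.Icc (0:ℝ) γ) (Set.Ioc γ 1 ×ˢ Set.Ioc γ 1) := by
    apply Set.disjoint_left.mpr
    rintro ⟨x, y⟩ hq hq'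
    exact absurd hq'.1.1 (not_lt.mpr hq.1.2)
  rw [MeasureTheory.measure_union hdisj (measurableSet_Ioc.prod measurableSet_Ioc)]
  rw [MeasureTheory.Measure.volume_eq_prod, MeasureTheory.Measure.prod_prod,
    MeasureTheory.Measure.prod_prod, Real.volume_Icc, Real.volume_Ioc]
  rw [← ENNReal.ofReal_mul (by linarith), ← ENNReal.ofReal_mul (by linarith),
    ← ENNReal.ofReal_add (by nlinarith) (by nlinarith)]
  congr 1
  ring

lemma volume_Oset (hγ0 : 0 ≤ γ) (hγ1 : γ ≤ 1) :
    volume (Oset γ) = ENNReal.ofReal (2*γ*(1-γ)) := by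
  unfold Oset
  rw [MeasureTheory.measure_diff (diagBlocks_subset hγ0 hγ1)
    measurableSet_diagBlocks.nullMeasurableSet
    (by rw [volume_diagBlocks hγ0 hγ1]; exact ENNReal.ofReal_ne_top)]
  rw [volume_unitSq, volume_diagBlocks hγ0 hγ1]
  rw [← ENNReal.ofReal_one, ← ENNReal.ofReal_sub _ (by nlinarith)]
  congr 1
  ring

lemma volume_Oset_ne_top : volume (Oset γ) ≠ ⊤ := by
  have h1 : volume (Oset γ) ≤ volume unitSq := MeasureTheory.measure_mono Set.diff_subset
  rw [volume_unitSq] at h1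
  exact ne_top_of_le_ne_top (by norm_num) h1

lemma fabc_on_diag {B : ℝ} {q : ℝ × ℝ} (hq : q ∈ diagBlocks γ) :
    fabc γ 0 B 0 q.1 q.2 = 0 := by
  unfold fabc
  rcases hq with hq | hq
  · rw [if_pos ⟨hq.1, hq.2⟩]
  · rcases Classical.em (q.1 ∈ Set.Icc (0:ℝ) γ ∧ q.2 ∈ Set.Icc (0:ℝ) γ) with h | h
    · rw [if_pos h]
    · rw [if_neg h, if_pos ⟨hq.1, hq.2⟩]

lemma fabc_on_Oset {A B C : ℝ} {q : ℝ × ℝ} (hq : q ∈ Oset γ) :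
    fabc γ A B C q.1 q.2 = B := by
  obtain ⟨hqs, hqd⟩ := hq
  unfold diagBlocks at hqd
  simp only [Set.mem_union, Set.mem_prod, not_or, not_and] at hqd
  unfold fabc
  rw [if_neg (by tauto), if_neg (by tauto)]

end PartD


section PartE
open Real MeasureTheory

variable {γ p r : ℝ} {d : ℕ}

lemma hRel_measurable : Measurable (hRel p) := by
  unfold hRel
  apply Measurable.add
  · exact measurable_id.mul (Real.measurable_log.comp (measurable_id.div_const p))
  · exact (measurable_const.sub measurable_id).mul
      (Real.measurable_log.comp ((measurable_const.sub measurable_id).div_const (1-p)))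

lemma integrableOn_of_bounded {g : ℝ × ℝ → ℝ} {s : Set (ℝ × ℝ)} (hvol : volume s ≠ ⊤)
    (hs : MeasurableSet s) (hmeas : Measurable g) (C : ℝ) (hbd : ∀ q ∈ s, |g q| ≤ C) :
    IntegrableOn g s := by
  refine Integrable.mono' (g := fun _ => C) (integrableOn_const hvol)
    hmeas.aestronglyMeasurable ?_
  exact (ae_restrict_mem hs).mono (fun q hq => by simpa [Real.norm_eq_abs] using hbd q hq)

lemma disjoint_diag_Oset : Disjoint (diagBlocks γ) (Oset γ) := Set.disjoint_sdiff_right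

lemma half_ennreal : (1/2 : ℝ≥0∞) = ENNReal.ofReal (1/2) := by
  rw [ENNReal.ofReal_div_of_pos two_pos, ENNReal.ofReal_one, ENNReal.ofReal_ofNat]

lemma unitSq_split (hγ0 : 0 ≤ γ) (hγ1 : γ ≤ 1) : unitSq = diagBlocks γ ∪ Oset γ :=
  (Set.union_diff_cancel (diagBlocks_subset hγ0 hγ1)).symm

/-- `Ient` of `fabc γ 0 p 0` against any `g` vanishing a.e. on the diagonal blocks. -/
lemma Ient_eq_off (hγ0 : 0 ≤ γ) (hγ1 : γ ≤ 1) (hp : 0 < p) (hp1 : p < 1) (g : ℝ → ℝ → ℝ)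
    (hdiag : ∀ᵐ q ∂(volume.restrict (diagBlocks γ)), g q.1 q.2 = 0) :
    Ient (fabc γ 0 p 0) g
      = (1/2) * ∫⁻ q in Oset γ, ENNReal.ofReal (hRel p (g q.1 q.2)) := by
  unfold Ient
  congr 1
  rw [unitSq_split hγ0 hγ1, lintegral_union measurableSet_Oset Set.disjoint_sdiff_right]
  have hDzero : ∫⁻ q in diagBlocks γ, relEnt (fabc γ 0 p 0 q.1 q.2) (g q.1 q.2) = 0 := by
    have hae : ∀ᵐ q ∂(volume.restrict (diagBlocks γ)),
        relEnt (fabc γ 0 p 0 q.1 q.2) (g q.1 q.2) = 0 := by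
      filter_upwards [hdiag, ae_restrict_mem measurableSet_diagBlocks] with q hgq hqD
      rw [fabc_on_diag hqD, hgq]
      simp [relEnt]
    rw [lintegral_congr_ae hae, lintegral_zero]
  rw [hDzero, zero_add]
  refine setLIntegral_congr_fun measurableSet_Oset ?_
  intro q hq
  dsimp only; rw [fabc_on_Oset hq]
  unfold relEnt hRel
  rw [if_neg (ne_of_gt hp), if_neg (ne_of_lt hp1)]

/-- The entropy of the two-block graphon `f_r^γ`. -/
lemma Ient_fr (hγ0 : 0 < γ) (hγ1 : γ < 1) (hp : 0 < p) (hp1 : p < 1)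
    (hr : r ∈ Set.Icc (0:ℝ) 1) :
    Ient (fabc γ 0 p 0) (fabc γ 0 r 0) = ENNReal.ofReal (γ * (1-γ) * hRel p r) := by
  rw [Ient_eq_off hγ0.le hγ1.le hp hp1 _
    (by filter_upwards [ae_restrict_mem measurableSet_diagBlocks] with q hq
        exact fabc_on_diag hq)]
  rw [setLIntegral_congr_fun measurableSet_Oset
    (fun q hq => by rw [fabc_on_Oset hq])]
  rw [setLIntegral_const, volume_Oset hγ0.le hγ1.le,
    ← ENNReal.ofReal_mul (hRel_nonneg hp hp1 hr), half_ennreal,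
    ← ENNReal.ofReal_mul (by norm_num)]
  congr 1
  ring

lemma graphon_integrableOn_hRel (hp : 0 < p) (hp1 : p < 1)
    {f : ℝ → ℝ → ℝ} (hf : IsGraphon f) {s : Set (ℝ×ℝ)}
    (hvol : volume s ≠ ⊤) (hs : MeasurableSet s) :
    IntegrableOn (fun q : ℝ × ℝ => hRel p (f q.1 q.2)) s := by
  refine integrableOn_of_bounded hvol hs (hRel_measurable.comp hf.1)
    (-Real.log p - Real.log (1-p)) ?_
  intro q _
  have h := hf.2.1 q.1 q.2
  rw [abs_of_nonneg (hRel_nonneg hp hp1 h)]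
  exact hRel_le_bound hp hp1 h

lemma graphon_integrableOn_pow {f : ℝ → ℝ → ℝ} (hf : IsGraphon f) {s : Set (ℝ×ℝ)}
    (hvol : volume s ≠ ⊤) (hs : MeasurableSet s) (d : ℕ) :
    IntegrableOn (fun q : ℝ × ℝ => (f q.1 q.2)^d) s := by
  refine integrableOn_of_bounded hvol hs (hf.1.pow_const d) 1 ?_
  intro q _
  have h := hf.2.1 q.1 q.2
  rw [abs_of_nonneg (pow_nonneg h.1 d)]
  exact pow_le_one₀ h.1 h.2

/-- `Ient` as `ofReal` of a real integral. -/
lemma Ient_eq_ofReal (hγ0 : 0 < γ) (hγ1 : γ < 1) (hp : 0 < p) (hp1 : p < 1)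
    (f : ℝ → ℝ → ℝ) (hf : IsGraphon f)
    (hdiag : ∀ᵐ q ∂(volume.restrict (diagBlocks γ)), f q.1 q.2 = 0) :
    Ient (fabc γ 0 p 0) f
      = ENNReal.ofReal ((1/2) * ∫ q in Oset γ, hRel p (f q.1 q.2)) := by
  rw [Ient_eq_off hγ0.le hγ1.le hp hp1 f hdiag]
  rw [← ofReal_integral_eq_lintegral_ofReal
    (graphon_integrableOn_hRel hp hp1 hf volume_Oset_ne_top measurableSet_Oset)
    (ae_of_all _ (fun q => hRel_nonneg hp hp1 (hf.2.1 q.1 q.2)))]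
  rw [half_ennreal, ← ENNReal.ofReal_mul (by norm_num)]

/-- the `d`-norm identity. -/
lemma normD_pow_eq (hγ0 : 0 ≤ γ) (hγ1 : γ ≤ 1) (hd : 1 ≤ d)
    (f : ℝ → ℝ → ℝ) (hf : IsGraphon f)
    (hdiag : ∀ᵐ q ∂(volume.restrict (diagBlocks γ)), f q.1 q.2 = 0) :
    normD d f ^ d = ∫ q in Oset γ, (f q.1 q.2)^d := by
  unfold normD
  have hX : 0 ≤ ∫ q in unitSq, (f q.1 q.2)^d :=
    integral_nonneg fun q => pow_nonneg (hf.2.1 q.1 q.2).1 d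
  have hpow : ((∫ q in unitSq, (f q.1 q.2)^d) ^ ((d:ℝ)⁻¹)) ^ d
      = ∫ q in unitSq, (f q.1 q.2)^d := by
    rw [← Real.rpow_natCast (_ ^ ((d:ℝ)⁻¹)) d, ← Real.rpow_mul hX,
      inv_mul_cancel₀ (by positivity : (d:ℝ) ≠ 0), Real.rpow_one]
  rw [hpow, unitSq_split hγ0 hγ1,
    setIntegral_union disjoint_diag_Oset measurableSet_Oset
      (graphon_integrableOn_pow hf (by
        rw [volume_diagBlocks hγ0 hγ1]; exact ENNReal.ofReal_ne_top) measurableSet_diagBlocks d)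
      (graphon_integrableOn_pow hf volume_Oset_ne_top measurableSet_Oset d)]
  have hzero : ∫ q in diagBlocks γ, (f q.1 q.2)^d = 0 := by
    rw [integral_congr_ae (g := fun _ => (0:ℝ))
      (by filter_upwards [hdiag] with q hq; rw [hq]; exact zero_pow (by omega))]
    exact integral_zero _ _
  rw [hzero, zero_add]

lemma toReal_volume_Oset (hγ0 : 0 ≤ γ) (hγ1 : γ ≤ 1) :
    (volume (Oset γ)).toReal = 2*γ*(1-γ) := by
  rw [volume_Oset hγ0 hγ1, ENNReal.toReal_ofReal (by nlinarith)]

/-- transfer of a.e. properties from the two pieces to the unit square -/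
lemma ae_unitSq_of_parts (hγ0 : 0 ≤ γ) (hγ1 : γ ≤ 1) {P : ℝ × ℝ → Prop}
    (h1 : ∀ᵐ q ∂(volume.restrict (diagBlocks γ)), P q)
    (h2 : ∀ᵐ q ∂(volume.restrict (Oset γ)), P q) :
    ∀ᵐ q ∂(volume.restrict unitSq), P q := by
  rw [unitSq_split hγ0 hγ1,
    Measure.restrict_union disjoint_diag_Oset measurableSet_Oset,
    ae_add_measure_iff]
  exact ⟨h1, h2⟩

lemma Ient_congr {W₀ f g : ℝ → ℝ → ℝ}
    (h : ∀ᵐ q ∂(volume.restrict unitSq), f q.1 q.2 = g q.1 q.2) :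
    Ient W₀ f = Ient W₀ g := by
  unfold Ient
  congr 1
  refine lintegral_congr_ae ?_
  filter_upwards [h] with q hq
  rw [hq]

end PartE



section PartF
open Real MeasureTheory

variable {γ p r a b : ℝ} {d : ℕ}

lemma core_ineq (hγ0 : 0 < γ) (hγ1 : γ < 1) (hp : 0 < p) (hp1 : p < 1)
    {f : ℝ → ℝ → ℝ} (hf : IsGraphon f)
    (ha : 0 ≤ a) (hmin : ∀ u ∈ Set.Icc (0:ℝ) 1, a * u^d + b ≤ hRel p u)
    (htouch : hRel p r = a * r^d + b)
    (hI : 2*γ*(1-γ) * r^d ≤ ∫ q in Oset γ, (f q.1 q.2)^d) :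
    2*γ*(1-γ) * hRel p r ≤ ∫ q in Oset γ, hRel p (f q.1 q.2) := by
  have hvol := volume_Oset_ne_top (γ := γ)
  have hintp := graphon_integrableOn_pow hf hvol measurableSet_Oset d
  have hinth := graphon_integrableOn_hRel hp hp1 hf hvol measurableSet_Oset
  have hintc : IntegrableOn (fun _ : ℝ × ℝ => b) (Oset γ) :=
    integrableOn_const hvol
  have hintline : IntegrableOn (fun q : ℝ × ℝ => a * (f q.1 q.2)^d + b) (Oset γ) :=
    (hintp.const_mul a).add hintc
  have hmono : ∫ q in Oset γ, (a * (f q.1 q.2)^d + b) ≤ ∫ q in Oset γ, hRel p (f q.1 q.2) :=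
    setIntegral_mono_on hintline hinth measurableSet_Oset
      (fun q _ => hmin _ (hf.2.1 q.1 q.2))
  have hlin : ∫ q in Oset γ, (a * (f q.1 q.2)^d + b)
      = a * (∫ q in Oset γ, (f q.1 q.2)^d) + b * (2*γ*(1-γ)) := by
    rw [integral_add (hintp.const_mul a) hintc, integral_const_mul, setIntegral_const, measureReal_def,
      toReal_volume_Oset hγ0.le hγ1.le, smul_eq_mul]
    ring
  have h1 : a * (2*γ*(1-γ) * r^d) ≤ a * ∫ q in Oset γ, (f q.1 q.2)^d :=
    mul_le_mul_of_nonneg_left hI ha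
  rw [htouch]
  nlinarith [hmono, hlin, h1]

lemma core_eq (hd : 1 ≤ d) (hγ0 : 0 < γ) (hγ1 : γ < 1) (hp : 0 < p) (hp1 : p < 1)
    (hpr : p < r) (hr1 : r < 1)
    {f : ℝ → ℝ → ℝ} (hf : IsGraphon f)
    (ha : 0 < a) (hmin : ∀ u ∈ Set.Icc (0:ℝ) 1, a * u^d + b ≤ hRel p u)
    (htouch : hRel p r = a * r^d + b)
    (hI : 2*γ*(1-γ) * r^d ≤ ∫ q in Oset γ, (f q.1 q.2)^d)
    (heq : ∫ q in Oset γ, hRel p (f q.1 q.2) = 2*γ*(1-γ) * hRel p r) :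
    ∀ᵐ q ∂(volume.restrict (Oset γ)), f q.1 q.2 = r := by
  have hr0 : 0 < r := lt_trans hp hpr
  have hvol := volume_Oset_ne_top (γ := γ)
  have hintp := graphon_integrableOn_pow hf hvol measurableSet_Oset d
  have hinth := graphon_integrableOn_hRel hp hp1 hf hvol measurableSet_Oset
  have hintc : ∀ c : ℝ, IntegrableOn (fun _ : ℝ × ℝ => c) (Oset γ) :=
    fun c => integrableOn_const hvol
  have hintline : IntegrableOn (fun q : ℝ × ℝ => a * (f q.1 q.2)^d + b) (Oset γ) :=
    (hintp.const_mul a).add (hintc b)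
  have hmono : ∫ q in Oset γ, (a * (f q.1 q.2)^d + b) ≤ ∫ q in Oset γ, hRel p (f q.1 q.2) :=
    setIntegral_mono_on hintline hinth measurableSet_Oset
      (fun q _ => hmin _ (hf.2.1 q.1 q.2))
  have hlin : ∫ q in Oset γ, (a * (f q.1 q.2)^d + b)
      = a * (∫ q in Oset γ, (f q.1 q.2)^d) + b * (2*γ*(1-γ)) := by
    rw [integral_add (hintp.const_mul a) (hintc b), integral_const_mul, setIntegral_const, measureReal_def,
      toReal_volume_Oset hγ0.le hγ1.le, smul_eq_mul]
    ring
  -- the mean is exactly r^d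
  have hImean : ∫ q in Oset γ, (f q.1 q.2)^d = 2*γ*(1-γ) * r^d := by
    refine le_antisymm ?_ hI
    have h2 : a * (∫ q in Oset γ, (f q.1 q.2)^d) + b * (2*γ*(1-γ))
        ≤ 2*γ*(1-γ) * (a * r^d + b) := by
      rw [← htouch, ← heq]
      linarith [hmono, hlin]
    have h3 : a * (∫ q in Oset γ, (f q.1 q.2)^d) ≤ a * (2*γ*(1-γ) * r^d) := by nlinarith
    exact le_of_mul_le_mul_left h3 ha
  -- the entropy equals the line a.e.
  have hzero1 : ∫ q in Oset γ, (hRel p (f q.1 q.2) - (a * (f q.1 q.2)^d + b)) = 0 := by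
    rw [integral_sub hinth hintline, heq, hlin, hImean, htouch]
    ring
  have hae1 : ∀ᵐ q ∂(volume.restrict (Oset γ)),
      hRel p (f q.1 q.2) - (a * (f q.1 q.2)^d + b) = 0 := by
    have := (integral_eq_zero_iff_of_nonneg_ae
      (ae_of_all _ (fun q : ℝ × ℝ => sub_nonneg.mpr (hmin _ (hf.2.1 q.1 q.2))))
      (hinth.sub hintline)).mp hzero1
    filter_upwards [this] with q hq using hq
  -- dichotomy from the sides lemma
  rcases sides_lemma hd hp hp1 ha hmin hr0 hr1 htouch with hside | hside
  · -- all other contact points are ≥ r, so f ≥ r a.e.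
    have haeg : ∀ᵐ q ∂(volume.restrict (Oset γ)), r ≤ f q.1 q.2 := by
      filter_upwards [hae1] with q hq
      by_contra hlt
      push_neg at hlt
      have := hside _ (hf.2.1 q.1 q.2) hlt
      linarith
    have hzero2 : ∫ q in Oset γ, ((f q.1 q.2)^d - r^d) = 0 := by
      rw [integral_sub hintp (hintc (r^d)), hImean, setIntegral_const, measureReal_def,
        toReal_volume_Oset hγ0.le hγ1.le, smul_eq_mul]
      ring
    have hae2 := (integral_eq_zero_iff_of_nonneg_ae
      (by filter_upwards [haeg] with q hq
          exact sub_nonneg.mpr (pow_le_pow_left₀ hr0.le hq d))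
      (hintp.sub (hintc (r^d)))).mp hzero2
    filter_upwards [hae2, haeg] with q hq _
    have hq' : (f q.1 q.2)^d = r^d := by
      have : (f q.1 q.2)^d - r^d = 0 := hq
      linarith
    exact (pow_left_inj₀ (hf.2.1 q.1 q.2).1 hr0.le (by omega)).mp hq'
  · -- all other contact points are ≤ r, so f ≤ r a.e.
    have haeg : ∀ᵐ q ∂(volume.restrict (Oset γ)), f q.1 q.2 ≤ r := by
      filter_upwards [hae1] with q hq
      by_contra hlt
      push_neg at hlt
      have := hside _ (hf.2.1 q.1 q.2) hlt
      linarith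
    have hzero2 : ∫ q in Oset γ, (r^d - (f q.1 q.2)^d) = 0 := by
      rw [integral_sub (hintc (r^d)) hintp, hImean, setIntegral_const, measureReal_def,
        toReal_volume_Oset hγ0.le hγ1.le, smul_eq_mul]
      ring
    have hae2 := (integral_eq_zero_iff_of_nonneg_ae
      (by filter_upwards [haeg] with q hq
          exact sub_nonneg.mpr (pow_le_pow_left₀ (hf.2.1 q.1 q.2).1 hq d))
      ((hintc (r^d)).sub hintp)).mp hzero2
    filter_upwards [hae2, haeg] with q hq _
    have hq' : (f q.1 q.2)^d = r^d := by
      have : r^d - (f q.1 q.2)^d = 0 := hq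
      linarith
    exact (pow_left_inj₀ (hf.2.1 q.1 q.2).1 hr0.le (by omega)).mp hq'

lemma core_eq_rp (hp : 0 < p) (hp1 : p < 1)
    {f : ℝ → ℝ → ℝ} (hf : IsGraphon f)
    (heq : ∫ q in Oset γ, hRel p (f q.1 q.2) = 0) :
    ∀ᵐ q ∂(volume.restrict (Oset γ)), f q.1 q.2 = p := by
  have hvol := volume_Oset_ne_top (γ := γ)
  have hinth := graphon_integrableOn_hRel hp hp1 hf hvol measurableSet_Oset
  have hae := (integral_eq_zero_iff_of_nonneg_ae
    (ae_of_all _ (fun q : ℝ × ℝ => hRel_nonneg hp hp1 (hf.2.1 q.1 q.2))) hinth).mp heq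
  filter_upwards [hae] with q hq
  exact (hRel_eq_zero_iff hp hp1 (hf.2.1 q.1 q.2)).mp hq

lemma core_r1 (hd : 1 ≤ d) (hγ0 : 0 < γ) (hγ1 : γ < 1)
    {f : ℝ → ℝ → ℝ} (hf : IsGraphon f)
    (hI : 2*γ*(1-γ) ≤ ∫ q in Oset γ, (f q.1 q.2)^d) :
    ∀ᵐ q ∂(volume.restrict (Oset γ)), f q.1 q.2 = 1 := by
  have hvol := volume_Oset_ne_top (γ := γ)
  have hintp := graphon_integrableOn_pow hf hvol measurableSet_Oset d
  have hintc : IntegrableOn (fun _ : ℝ × ℝ => (1:ℝ)) (Oset γ) :=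
    integrableOn_const hvol
  have hub : ∫ q in Oset γ, (f q.1 q.2)^d ≤ 2*γ*(1-γ) := by
    have := setIntegral_mono_on hintp hintc measurableSet_Oset
      (fun q _ => pow_le_one₀ (hf.2.1 q.1 q.2).1 (hf.2.1 q.1 q.2).2)
    rwa [setIntegral_const, measureReal_def, toReal_volume_Oset hγ0.le hγ1.le, smul_eq_mul, mul_one] at this
  have hzero : ∫ q in Oset γ, ((1:ℝ) - (f q.1 q.2)^d) = 0 := by
    rw [integral_sub hintc hintp, setIntegral_const, measureReal_def,
      toReal_volume_Oset hγ0.le hγ1.le, smul_eq_mul, mul_one]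
    linarith
  have hae := (integral_eq_zero_iff_of_nonneg_ae
    (ae_of_all _ (fun q : ℝ × ℝ => sub_nonneg.mpr
      (pow_le_one₀ (hf.2.1 q.1 q.2).1 (hf.2.1 q.1 q.2).2))) (hintc.sub hintp)).mp hzero
  filter_upwards [hae] with q hq
  have hq' : (f q.1 q.2)^d = 1^d := by
    have : (1:ℝ) - (f q.1 q.2)^d = 0 := hq
    rw [one_pow]; linarith
  exact (pow_left_inj₀ (hf.2.1 q.1 q.2).1 zero_le_one (by omega)).mp hq'

end PartF

/-- the symmetric regime for bipartite Erdős–Rényi graphons: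
if `(r^d, h_p(r))` is on the convex minorant of `ψ_p` and `‖f‖_d^d ≥ 2γ(1−γ)r^d`
then `I_{W₀}(f) ≥ I_{W₀}(f_r^γ)`, with equality iff `f = f_r^γ` a.e. -/
theorem stmt17 (d : ℕ) (hd : 1 ≤ d) (γ p r : ℝ) (hγ : 0 < γ) (hγ1 : γ < 1)
    (hp : 0 < p) (hp1 : p < 1) (hpr : p ≤ r) (hr1 : r ≤ 1)
    (hconv : convexMinorant (psi d p) (r ^ d) = psi d p (r ^ d))
    (f : ℝ → ℝ → ℝ) (hf : IsGraphon f)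
    (hdiag : ∀ᵐ q ∂(volume.restrict (diagBlocks γ)), f q.1 q.2 = 0)
    (hnorm : 2 * γ * (1 - γ) * r ^ d ≤ normD d f ^ d) :
    Ient (fabc γ 0 p 0) (fabc γ 0 r 0) ≤ Ient (fabc γ 0 p 0) f ∧
      (Ient (fabc γ 0 p 0) f = Ient (fabc γ 0 p 0) (fabc γ 0 r 0) ↔
        ∀ᵐ q ∂(volume.restrict unitSq), f q.1 q.2 = fabc γ 0 r 0 q.1 q.2) := by
  have hrIcc : r ∈ Set.Icc (0:ℝ) 1 := ⟨le_trans hp.le hpr, hr1⟩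
  have hI : 2*γ*(1-γ) * r^d ≤ ∫ q in Oset γ, (f q.1 q.2)^d := by
    rw [← normD_pow_eq hγ.le hγ1.le hd f hf hdiag]
    calc 2*γ*(1-γ) * r^d = 2*γ*(1-γ)*r^d := by ring
      _ ≤ _ := hnorm
  have hIf := Ient_eq_ofReal hγ hγ1 hp hp1 f hf hdiag
  have hIfr := Ient_fr (r := r) hγ hγ1 hp hp1 hrIcc
  have hJnn : 0 ≤ ∫ q in Oset γ, hRel p (f q.1 q.2) :=
    MeasureTheory.integral_nonneg (fun q => hRel_nonneg hp hp1 (hf.2.1 q.1 q.2))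
  have hhnn : 0 ≤ hRel p r := hRel_nonneg hp hp1 hrIcc
  have conclude : (∀ᵐ q ∂(volume.restrict (Oset γ)), f q.1 q.2 = r) →
      ∀ᵐ q ∂(volume.restrict unitSq), f q.1 q.2 = fabc γ 0 r 0 q.1 q.2 := by
    intro hO
    refine ae_unitSq_of_parts hγ.le hγ1.le ?_ ?_
    · filter_upwards [hdiag, MeasureTheory.ae_restrict_mem measurableSet_diagBlocks]
        with q h0 hqD
      rw [h0, fabc_on_diag hqD]
    · filter_upwards [hO, MeasureTheory.ae_restrict_mem measurableSet_Oset] with q h0 hqO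
      rw [h0, fabc_on_Oset hqO]
  have hback : (∀ᵐ q ∂(volume.restrict unitSq), f q.1 q.2 = fabc γ 0 r 0 q.1 q.2) →
      Ient (fabc γ 0 p 0) f = Ient (fabc γ 0 p 0) (fabc γ 0 r 0) := Ient_congr
  rcases eq_or_lt_of_le hr1 with hr1' | hr1'
  · -- case r = 1
    have hO : ∀ᵐ q ∂(volume.restrict (Oset γ)), f q.1 q.2 = r := by
      rw [hr1']
      refine core_r1 hd hγ hγ1 hf ?_
      calc 2*γ*(1-γ) = 2*γ*(1-γ) * r^d := by rw [hr1']; ring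
        _ ≤ _ := hI
    have hae := conclude hO
    have heqI := hback hae
    exact ⟨le_of_eq heqI.symm, ⟨fun _ => hae, fun _ => heqI⟩⟩
  rcases eq_or_lt_of_le hpr with hpr' | hpr'
  · -- case r = p
    have h0 : hRel p r = 0 := by rw [← hpr']; exact hRel_self hp hp1
    refine ⟨?_, ?_, hback⟩
    · rw [hIfr, h0]
      simp
    · intro heq
      rw [hIf, hIfr, h0] at heq
      simp only [mul_zero, ENNReal.ofReal_zero, ENNReal.ofReal_eq_zero] at heq
      have hJ0 : ∫ q in Oset γ, hRel p (f q.1 q.2) = 0 := by linarith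
      refine conclude ?_
      have := core_eq_rp hp hp1 hf hJ0
      rw [← hpr']
      exact this
  · -- case p < r < 1
    obtain ⟨A, B, hA, hmin, htouch⟩ := exists_support_line hd hp hp1 hpr' hr1' hconv
    have hineq := core_ineq hγ hγ1 hp hp1 hf hA.le hmin htouch hI
    refine ⟨?_, ?_, hback⟩
    · rw [hIf, hIfr]
      apply ENNReal.ofReal_le_ofReal
      linarith
    · intro heq
      rw [hIf, hIfr] at heq
      rw [ENNReal.ofReal_eq_ofReal_iff (by linarith)
        (mul_nonneg (mul_nonneg hγ.le (by linarith)) hhnn)] at heq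
      have hJeq : ∫ q in Oset γ, hRel p (f q.1 q.2) = 2*γ*(1-γ) * hRel p r := by
        linarith
      exact conclude (core_eq hd hγ hγ1 hp hp1 hpr' hr1' hf hA hmin htouch hI hJeq)

end GraphonLDP
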